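/- arXiv:0905.3845 — 4 statements merged into one kernel-verified Lean document; each statement's English description precedes it below -/
import Mathlib

section
/- Let k be a field and X a nonzero k-module. For odd n ≥ 1, the finite precomplex X_n (X in degrees 0,…,n−1 with identity differentials) is not contractible. -/
/-!
Transport the contracting homotopy along the identifications `C.X i ≃ X` and evaluate it at a
fixed `x : X`; call the degree-`i` value `yᵢ`, with `yᵢ = 0` whenever `h i` starts or ends in a
zero module. The identity `d h + h d = id` in degree `i + 1` reads `yᵢ + yᵢ₊₁ = x` for
`-1 ≤ i ≤ n - 2`, while `y₋₁ = yₙ₋₁ = 0`. So `y` alternates `0, x, 0, x, …` from `y₋₁`, and as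
`n` is odd, `x = yₙ₋₁ = 0`.
-/

/-- A precomplex over a commutative ring `k`: a `ℤ`-graded `k`-module together with a
degree-1 `k`-linear map `d`, with no condition imposed on `d²`. -/
structure Precomplex (k : Type) [CommRing k] where
  X : ℤ → Type
  [acg : ∀ i, AddCommGroup (X i)]
  [mod : ∀ i, Module k (X i)]
  d : ∀ i, X i →ₗ[k] X (i + 1)

attribute [instance] Precomplex.acg Precomplex.mod

/-- A precomplex is contractible if there is a degree `-1` map `h` with `d h + h d = id`. -/
def Precomplex.Contractible {k : Type} [CommRing k] (C : Precomplex k) : Prop :=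
  ∃ h : ∀ i, C.X (i + 1) →ₗ[k] C.X i,
    ∀ i : ℤ, (C.d i).comp (h i) + (h (i + 1)).comp (C.d (i + 1)) = LinearMap.id

theorem eq_zero_of_add_succ_eq_of_odd {A : Type*} [AddCommGroup A] {z : ℕ → A} {a : A} {n : ℕ}
    (hstep : ∀ i < n, z i + z (i + 1) = a) (h0 : z 0 = 0) (hn : z n = 0) (hodd : Odd n) :
    a = 0 := by
  have hodd_terms : ∀ m, 2 * m + 1 ≤ n → z (2 * m + 1) = a := by
    intro m hm
    induction m with
    | zero => simpa [h0] using hstep 0 (by omega)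
    | succ m ih =>
      have heven : z (2 * m + 2) = 0 := by
        simpa [ih (by omega)] using hstep (2 * m + 1) (by omega)
      simpa [heven, Nat.mul_succ] using hstep (2 * m + 2) (by omega)
  obtain ⟨m, rfl⟩ := hodd
  rw [← hodd_terms m le_rfl, hn]

section

variable {k : Type} [CommRing k] {X : Type} [AddCommGroup X] [Module k X] {n : ℕ}
  {C : Precomplex k} (e : ∀ i : ℤ, 0 ≤ i → i < (n : ℤ) → (C.X i ≃ₗ[k] X))

def transferredHomotopy (h : ∀ i, C.X (i + 1) →ₗ[k] C.X i) (x : X) (i : ℤ) : X :=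
  if hi : 0 ≤ i ∧ i + 1 < (n : ℤ) then
    e i hi.1 (by omega) (h i ((e (i + 1) (by omega) hi.2).symm x))
  else 0

theorem transferredHomotopy_add_succ
    (hz : ∀ i : ℤ, ¬(0 ≤ i ∧ i < (n : ℤ)) → Subsingleton (C.X i))
    (hd : ∀ (i : ℤ) (h0 : 0 ≤ i) (h1 : i + 1 < (n : ℤ)) (x : C.X i),
      e (i + 1) (Int.le_add_one h0) h1 (C.d i x) = e i h0 (Int.lt_of_add_one_le h1.le) x)
    {h : ∀ i, C.X (i + 1) →ₗ[k] C.X i}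
    (hh : ∀ i, (C.d i).comp (h i) + (h (i + 1)).comp (C.d (i + 1)) = LinearMap.id)
    (x : X) {j : ℤ} (hj0 : -1 ≤ j) (hj1 : j + 1 < (n : ℤ)) :
    transferredHomotopy e h x j + transferredHomotopy e h x (j + 1) = x := by
  set v := (e (j + 1) (by omega) hj1).symm x
  have hdh : e (j + 1) (by omega) hj1 (C.d j (h j v)) = transferredHomotopy e h x j := by
    by_cases hj : 0 ≤ j
    · rw [hd j hj hj1, transferredHomotopy, dif_pos ⟨hj, hj1⟩]
    · have : Subsingleton (C.X j) := hz j (by omega)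
      rw [Subsingleton.elim (h j v) 0, map_zero, map_zero, transferredHomotopy,
        dif_neg (by omega)]
  have hhd : e (j + 1) (by omega) hj1 (h (j + 1) (C.d (j + 1) v))
      = transferredHomotopy e h x (j + 1) := by
    by_cases hj : j + 1 + 1 < (n : ℤ)
    · have hdv : C.d (j + 1) v = (e (j + 1 + 1) (by omega) hj).symm x := by
        rw [LinearEquiv.eq_symm_apply, hd (j + 1) (by omega) hj, LinearEquiv.apply_symm_apply]
      rw [hdv, transferredHomotopy, dif_pos ⟨by omega, hj⟩]
    · have : Subsingleton (C.X (j + 1 + 1)) := hz _ (by omega)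
      rw [Subsingleton.elim (C.d (j + 1) v) 0, map_zero, map_zero, transferredHomotopy,
        dif_neg (by omega)]
  have hcontract := LinearMap.congr_fun (hh j) v
  simp only [LinearMap.add_apply, LinearMap.comp_apply, LinearMap.id_apply] at hcontract
  rw [← hdh, ← hhd, ← map_add, hcontract, LinearEquiv.apply_symm_apply]

end

/-- Over a field `k`, for a nonzero `k`-vector space `X` and odd `n ≥ 1`, the finite
precomplex `X_n` (`X` in degrees `0,…,n-1`, identity differentials) is not contractible. -/
theorem stmt3 (k : Type) [Field k] (X : Type) [AddCommGroup X] [Module k X] [Nontrivial X]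
    (n : ℕ) (hodd : Odd n) (C : Precomplex k)
    (e : ∀ i : ℤ, 0 ≤ i → i < (n : ℤ) → (C.X i ≃ₗ[k] X))
    (hz : ∀ i : ℤ, ¬(0 ≤ i ∧ i < (n : ℤ)) → Subsingleton (C.X i))
    (hd : ∀ (i : ℤ) (h0 : 0 ≤ i) (h1 : i + 1 < (n : ℤ)) (x : C.X i),
      e (i + 1) (by omega) h1 (C.d i x) = e i h0 (by omega) x) :
    ¬ C.Contractible := by
  rintro ⟨h, hh⟩
  obtain ⟨x, hx⟩ := exists_ne (0 : X)
  refine hx (eq_zero_of_add_succ_eq_of_odd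
    (z := fun i : ℕ => transferredHomotopy e h x (i - 1)) (fun i hi => ?_) ?_ ?_ hodd)
  · simpa using transferredHomotopy_add_succ e hz hd hh x (j := i - 1) (by omega) (by omega)
  · exact dif_neg (by omega)
  · exact dif_neg (by omega)
end

section
/- Let A = k[c] or A = k[c]/cⁿ (c in degree 2). A morphism f of cdg A-modules is contractible by a graded A-linear homotopy if and only if it is contractible by a graded k-linear homotopy. In particular: if h is a degree −1 k-linear map with hd + dh = f and f commutes with d, then h can be replaced by an A-linear homotopy; concretely, hd + dh = f and fd = df imply hd² = d²h up to homotopy-correction, and an A-linear contracting homotopy exists. -/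
/-!
Every graded `k`-linear homotopy `h` with `d h + h d = f` already commutes with `d²`, i.e. is
`A`-linear: composing `d h + h d = f` with `d` on the left and on the right and using
`d f = f d`, the two copies of `d h d` cancel and leave `d² h = h d²`.
-/

theorem LinearMap.comp_comp_eq_of_homotopy {R : Type*} [Semiring R]
    {M₁ M₂ M₃ N₀ N₁ N₂ : Type*} [AddCommMonoid M₁] [AddCommMonoid M₂] [AddCommMonoid M₃]
    [AddCommMonoid N₀] [AddCommMonoid N₁] [AddCommGroup N₂]
    [Module R M₁] [Module R M₂] [Module R M₃] [Module R N₀] [Module R N₁] [Module R N₂]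
    {dM₁ : M₁ →ₗ[R] M₂} {dM₂ : M₂ →ₗ[R] M₃} {dN₀ : N₀ →ₗ[R] N₁} {dN₁ : N₁ →ₗ[R] N₂}
    {h₀ : M₁ →ₗ[R] N₀} {h₁ : M₂ →ₗ[R] N₁} {h₂ : M₃ →ₗ[R] N₂}
    {f₁ : M₁ →ₗ[R] N₁} {f₂ : M₂ →ₗ[R] N₂}
    (e₁ : dN₀.comp h₀ + h₁.comp dM₁ = f₁) (e₂ : dN₁.comp h₁ + h₂.comp dM₂ = f₂)
    (hf : dN₁.comp f₁ = f₂.comp dM₁) :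
    h₂.comp (dM₂.comp dM₁) = (dN₁.comp dN₀).comp h₀ := by
  have key : (dN₁.comp h₁).comp dM₁ + h₂.comp (dM₂.comp dM₁) =
      (dN₁.comp h₁).comp dM₁ + (dN₁.comp dN₀).comp h₀ := by
    calc (dN₁.comp h₁).comp dM₁ + h₂.comp (dM₂.comp dM₁) = f₂.comp dM₁ := by
          rw [← e₂, LinearMap.add_comp]; rfl
      _ = dN₁.comp f₁ := hf.symm
      _ = (dN₁.comp h₁).comp dM₁ + (dN₁.comp dN₀).comp h₀ := by
          rw [← e₁, LinearMap.comp_add, add_comm]; rfl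
  exact add_left_cancel key

/-- **Contractibility over `A = k[c]` (or `k[c]/cⁿ`) can be checked `k`-linearly.**
Cdg modules over the initial cdg algebras are precomplexes (with `d^{2n} = 0` in the
quotient case), and a graded homotopy is `A`-linear exactly when it commutes with the
action of `c`, i.e. with `d²`.  For a morphism `f` of precomplexes, there is a graded
`k`-linear homotopy `h` with `d h + h d = f` if and only if there is one which moreover
commutes with `d²` (i.e. an `A`-linear homotopy). -/
theorem stmt8 (k : Type) [CommRing k] (M N : Precomplex k)
    (f : ∀ i : ℤ, M.X i →ₗ[k] N.X i)
    (hf : ∀ i : ℤ, (N.d i).comp (f i) = (f (i + 1)).comp (M.d i)) :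
    (∃ h : ∀ i : ℤ, M.X (i + 1) →ₗ[k] N.X i,
      ∀ i : ℤ, (N.d i).comp (h i) + (h (i + 1)).comp (M.d (i + 1)) = f (i + 1)) ↔
    (∃ h : ∀ i : ℤ, M.X (i + 1) →ₗ[k] N.X i,
      (∀ i : ℤ, (N.d i).comp (h i) + (h (i + 1)).comp (M.d (i + 1)) = f (i + 1)) ∧
      (∀ i : ℤ, (h (i + 1 + 1)).comp ((M.d (i + 1 + 1)).comp (M.d (i + 1))) =
        ((N.d (i + 1)).comp (N.d i)).comp (h i))) := by
  constructor
  · rintro ⟨h, hh⟩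
    exact ⟨h, hh, fun i => LinearMap.comp_comp_eq_of_homotopy (hh i) (hh (i + 1)) (hf (i + 1))⟩
  · rintro ⟨h, hh, -⟩
    exact ⟨h, hh⟩
end

section
/- Let A be a graded algebra such that the category of graded A-modules has finite homological dimension. Then every differential graded A-module that is projective as a graded A-module and acyclic (has zero cohomology) is contractible. -/
/-!
The hypothesis bounds `Ext` only between modules in `Type`, while the complex may live in any
universe. Since ideals are small, this bound transfers: Baer's criterion shows that if
`Ext^(n+1)(R ⧸ I, -)` vanishes for all ideals `I`, then every module has injective dimension
at most `n`, hence every module has projective dimension at most `n`.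

In an acyclic complex `K` of projectives the cycles `Z i` sit in short exact sequences
`0 → Z i → K.X i → Z (i + 1) → 0`, so dimension shifting along `n` of them shows that each
`Z i` is projective. Then all these sequences split, and the splittings `r, s` glue to the
contracting homotopy `K.X (i + 1) ⟶ Z (i + 1) ⟶ K.X i`.
-/

open CategoryTheory

universe u v w

namespace CategoryTheory

section
variable {k : Type*} [Ring k] {C : Type*} [Category C] [Abelian C] [Linear k C]
  [EnoughProjectives C]

-- `_root_.Ext k C` is the left-derived-functor `Ext` and `Abelian.Ext` the derived-category one;
-- both are the cohomology of `Hom(P, Y)` for a projective resolution `P` of `X`.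
lemma Abelian.Ext.eq_zero_of_isZero_ext [HasExt C] {X Y : C} {n : ℕ}
    (h : Limits.IsZero (((_root_.Ext k C (n + 1)).obj (Opposite.op X)).obj Y))
    (e : Abelian.Ext X Y (n + 1)) : e = 0 := by
  let P := projectiveResolution X
  have hexact : (P.complex.linearYonedaObj k Y).ExactAt (n + 1) :=
    (HomologicalComplex.exactAt_iff_isZero_homology _ _).2 (h.of_iso (P.isoExt (n + 1) Y).symm)
  rw [HomologicalComplex.exactAt_iff' _ n (n + 1) (n + 2) (by simp) (by simp),
    ShortComplex.moduleCat_exact_iff] at hexact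
  obtain ⟨f, hf, rfl⟩ := P.extMk_surjective e (n + 2) rfl
  rw [P.extMk_eq_zero_iff f (n + 2) rfl hf n rfl]
  exact hexact f hf

lemma hasProjectiveDimensionLT_of_isZero_ext {X : C} {n : ℕ}
    (h : ∀ i, n < i → ∀ Y, Limits.IsZero (((_root_.Ext k C i).obj (Opposite.op X)).obj Y)) :
    HasProjectiveDimensionLT X (n + 1) :=
  letI := HasExt.standard C
  HasProjectiveDimensionLT.mk fun i hi Y e => by
    obtain ⟨i, rfl⟩ : ∃ j, i = j + 1 := ⟨i - 1, by omega⟩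
    exact Abelian.Ext.eq_zero_of_isZero_ext (h _ hi Y) e

end

lemma ShortComplex.ShortExact.exists_comp_eq_of_ext_one_eq_zero {C : Type*} [Category C]
    [Abelian C] [HasExt C] {S : ShortComplex C} (hS : S.ShortExact) {Y : C}
    (hY : ∀ e : Abelian.Ext S.X₃ Y 1, e = 0) (φ : S.X₁ ⟶ Y) :
    ∃ ψ : S.X₂ ⟶ Y, S.f ≫ ψ = φ := by
  obtain ⟨x, hx⟩ := Abelian.Ext.contravariant_sequence_exact₁ hS _ (Abelian.Ext.mk₀ φ)
    (zero_add 1) (hY _)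
  obtain ⟨ψ, rfl⟩ := Abelian.Ext.homEquiv₀.symm.surjective x
  exact ⟨ψ, Abelian.Ext.homEquiv₀.symm.injective (by simpa using hx)⟩

end CategoryTheory

namespace ModuleCat
variable {R : Type u} [Ring R] [Small.{v} R]

noncomputable abbrev idealShortComplex (I : Ideal R) : ShortComplex (ModuleCat.{v} R) :=
  ModuleCat.shortComplexOfConj (Shrink.linearEquiv R I) (Shrink.linearEquiv R R)
    (Shrink.linearEquiv R (R ⧸ I)) I.subtype I.mkQ
    (LinearMap.exact_subtype_mkQ I).linearMap_comp_eq_zero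

lemma idealShortComplex_shortExact (I : Ideal R) : (idealShortComplex.{u, v} I).ShortExact :=
  ModuleCat.shortComplexOfConj_shortExact _ _ _ _ _ (LinearMap.exact_subtype_mkQ I)
    I.injective_subtype I.mkQ_surjective

lemma injective_of_ext_one_quotient_eq_zero (N : ModuleCat.{v} R)
    (h : ∀ (I : Ideal R) (e : Abelian.Ext (ModuleCat.of R (Shrink.{v} (R ⧸ I))) N 1), e = 0) :
    Injective N := by
  rw [← Module.injective_iff_injective_object]
  refine Module.Baer.injective fun I g => ?_
  obtain ⟨ψ, hψ⟩ := (idealShortComplex_shortExact I).exists_comp_eq_of_ext_one_eq_zero (h I)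
    (ModuleCat.ofHom (g ∘ₗ (Shrink.linearEquiv R I).toLinearMap))
  refine ⟨ψ.hom ∘ₗ (Shrink.linearEquiv R R).symm.toLinearMap, fun x hx => ?_⟩
  simpa using congr($hψ ((Shrink.linearEquiv R I).symm ⟨x, hx⟩))

lemma hasInjectiveDimensionLT_of_ext_quotient_eq_zero (m : ℕ) (N : ModuleCat.{v} R)
    (h : ∀ (I : Ideal R) (e : Abelian.Ext (ModuleCat.of R (Shrink.{v} (R ⧸ I))) N (m + 1)),
      e = 0) :
    HasInjectiveDimensionLT N (m + 1) := by
  induction m generalizing N with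
  | zero =>
    have := injective_of_ext_one_quotient_eq_zero N h
    infer_instance
  | succ m ih =>
    obtain ⟨P⟩ := EnoughInjectives.presentation N
    let S := ShortComplex.mk P.f (Limits.cokernel.π P.f) (Limits.cokernel.condition P.f)
    have hS : S.ShortExact := { exact := ShortComplex.exact_cokernel P.f }
    have hS₃ : HasInjectiveDimensionLT S.X₃ (m + 1) := ih _ fun I e => by
      obtain ⟨x, rfl⟩ := Abelian.Ext.covariant_sequence_exact₃ _ hS e rfl (h I _)
      rw [x.eq_zero_of_injective, Abelian.Ext.zero_comp]
    exact (hS.hasInjectiveDimensionLT_X₃_iff m P.injective).1 hS₃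

lemma hasProjectiveDimensionLT_of_forall_quotient {m : ℕ}
    (h : ∀ I : Ideal R, HasProjectiveDimensionLT (ModuleCat.of R (Shrink.{v} (R ⧸ I))) (m + 1))
    (X : ModuleCat.{v} R) : HasProjectiveDimensionLT X (m + 1) :=
  HasProjectiveDimensionLT.mk fun i hi Y e => by
    have := hasInjectiveDimensionLT_of_ext_quotient_eq_zero m Y fun I e' =>
      e'.eq_zero_of_hasProjectiveDimensionLT (m + 1) le_rfl
    exact e.eq_zero_of_hasInjectiveDimensionLT (m + 1) hi

lemma hasProjectiveDimensionLT_shrink_of_forall {m : ℕ} [Small.{w} R]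
    (h : ∀ M : ModuleCat.{w} R, HasProjectiveDimensionLT M (m + 1)) (I : Ideal R) :
    HasProjectiveDimensionLT (ModuleCat.of R (Shrink.{v} (R ⧸ I))) (m + 1) :=
  have : HasProjectiveDimensionLE (ModuleCat.of R (Shrink.{w} (R ⧸ I))) m := h _
  ModuleCat.hasProjectiveDimensionLE_of_linearEquiv (M := ModuleCat.of R (Shrink.{w} (R ⧸ I)))
    (N := ModuleCat.of R (Shrink.{v} (R ⧸ I)))
    ((Shrink.linearEquiv R (R ⧸ I)).trans (Shrink.linearEquiv.{v} R (R ⧸ I)).symm) m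

end ModuleCat

namespace CochainComplex

section
variable {V : Type*} [Category V] [Preadditive V] (K : CochainComplex V ℤ)

noncomputable def homotopyIdZeroOfSplittings (B : ℤ → V) (ι : ∀ i, B i ⟶ K.X i)
    (π : ∀ i, K.X i ⟶ B (i + 1)) (hd : ∀ i, π i ≫ ι (i + 1) = K.d i (i + 1))
    (w : ∀ i, ι i ≫ π i = 0) (σ : ∀ i, (ShortComplex.mk (ι i) (π i) (w i)).Splitting) :
    Homotopy (𝟙 K) 0 :=
  let h : ∀ i j, (ComplexShape.up ℤ).Rel j i → (K.X i ⟶ K.X j) := fun i j hji =>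
    (σ i).r ≫ eqToHom (congrArg B hji.symm) ≫ (σ j).s
  (Homotopy.ofEq (by
    ext i
    obtain ⟨j, rfl⟩ : ∃ j, i = j + 1 := ⟨i - 1, by omega⟩
    rw [Homotopy.nullHomotopicMap'_f (c := ComplexShape.up ℤ) (k₂ := j) rfl rfl, ← hd, ← hd]
    simp only [h, eqToHom_refl, Category.id_comp, Category.assoc, HomologicalComplex.id_f]
    have hr := (σ (j + 1 + 1)).f_r
    have hs := (σ j).s_g
    dsimp at hr hs
    rw [reassoc_of% hr, reassoc_of% hs, ← (σ (j + 1)).id]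
    exact add_comm _ _)).trans (Homotopy.nullHomotopy' h)

end

section
variable {R : Type u} [Ring R] (K : CochainComplex (ModuleCat.{v} R) ℤ)

abbrev cyclesSubmodule (i : ℤ) : Submodule R (K.X i) := LinearMap.ker (K.d i (i + 1)).hom

abbrev cyclesShortComplex (i : ℤ) : ShortComplex (ModuleCat.{v} R) :=
  ModuleCat.shortComplexOfCompEqZero (K.cyclesSubmodule i).subtype
    ((K.d i (i + 1)).hom.codRestrict (K.cyclesSubmodule (i + 1)) fun x => by
      simp [← ModuleCat.comp_apply])
    (by ext x; exact x.2)

lemma cyclesShortComplex_shortExact (i : ℤ) (hK : K.ExactAt (i + 1)) :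
    (K.cyclesShortComplex i).ShortExact := by
  refine ModuleCat.shortComplex_shortExact _ (fun x => ?_) (Submodule.injective_subtype _) ?_
  · simp [Subtype.ext_iff]
  · rw [HomologicalComplex.exactAt_iff' _ i (i + 1) (i + 1 + 1) (by simp) (by simp),
      ShortComplex.moduleCat_exact_iff] at hK
    rintro ⟨z, hz⟩
    obtain ⟨x, rfl⟩ := hK z hz
    exact ⟨x, rfl⟩

variable {K}

lemma projective_cycles (hproj : ∀ i, Projective (K.X i)) (hacyc : ∀ i, K.ExactAt i) (m : ℕ)
    (hpd : ∀ i, HasProjectiveDimensionLT (K.cyclesShortComplex i).X₁ (m + 1)) (i : ℤ) :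
    Projective (K.cyclesShortComplex i).X₁ := by
  induction m with
  | zero => exact projective_iff_hasProjectiveDimensionLT_one.2 (hpd i)
  | succ m ih =>
    refine ih fun i => ?_
    exact ((K.cyclesShortComplex_shortExact i (hacyc _)).hasProjectiveDimensionLT_X₃_iff
      m (hproj i)).1 (hpd (i + 1))

noncomputable def homotopyIdZeroOfProjective (hproj : ∀ i, Projective (K.X i))
    (hacyc : ∀ i, K.ExactAt i) {m : ℕ}
    (hpd : ∀ X : ModuleCat.{v} R, HasProjectiveDimensionLT X (m + 1)) : Homotopy (𝟙 K) 0 :=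
  have := projective_cycles hproj hacyc m fun _ => hpd _
  K.homotopyIdZeroOfSplittings _ _ _ (fun _ => rfl) _ fun i =>
    (K.cyclesShortComplex_shortExact i (hacyc _)).splittingOfProjective

end

end CochainComplex

/-- **Graded projective acyclic dg modules over a graded algebra of finite homological
dimension are contractible.**  We take the graded algebra `A` concentrated in degree `0`
(a ring `R`), so that graded `A`-modules are `ℤ`-indexed families of `R`-modules, dg
`A`-modules are cochain complexes of `R`-modules and graded projectivity is degreewise
projectivity.  Finite homological dimension of the graded module category is expressed
by the vanishing of `Ext^i` for all large `i`.  Then every cochain complex of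
projective `R`-modules which is acyclic (exact in every degree) is contractible,
i.e. its identity is null-homotopic. -/
theorem stmt12 (R : Type) [Ring R]
    (hfd : ∃ n : ℕ, ∀ i : ℕ, n < i → ∀ M N : ModuleCat R,
      Limits.IsZero (((Ext ℤ (ModuleCat R) i).obj (Opposite.op M)).obj N)) :
    ∀ C : CochainComplex (ModuleCat R) ℤ,
      (∀ i : ℤ, Projective (C.X i)) → (∀ i : ℤ, C.ExactAt i) →
      Nonempty (Homotopy (𝟙 C) 0) := by
  obtain ⟨n, hfd⟩ := hfd
  intro C hproj hacyc
  have hpd : ∀ M : ModuleCat R, HasProjectiveDimensionLT M (n + 1) := fun M =>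
    hasProjectiveDimensionLT_of_isZero_ext fun i hi N => hfd i hi M N
  exact ⟨C.homotopyIdZeroOfProjective hproj hacyc
    (ModuleCat.hasProjectiveDimensionLT_of_forall_quotient
      (ModuleCat.hasProjectiveDimensionLT_shrink_of_forall hpd))⟩
end

section
/- Let k be a commutative ring, R a k-algebra with central element ρ that is not invertible, and A = R_ρ[u] the cdg algebra R[u] (u in degree 2) with curvature ρu. Then the cdg A-module A_{ρ,u} given by the precomplex 0 → R →^ρ R →^1 R →^ρ R →^1 ⋯ (starting in degree 0, alternating ρ and identity) with the natural u-action is not contractible. -/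
theorem isUnit_of_forall_mul_mul_eq_self {R : Type*} [Ring R] {ρ c : R}
    (h : ∀ x, ρ * x * c = x) : IsUnit ρ := by
  have hρc : ρ * c = 1 := by simpa using h 1
  -- `c * ρ = ρ * (c * ρ) * c = (ρ * c) * (ρ * c)`
  have hcρ : c * ρ = 1 := by
    rw [← h (c * ρ), ← mul_assoc, hρc, one_mul, hρc]
  exact ⟨⟨ρ, c, hρc, hcρ⟩, rfl⟩

theorem isUnit_of_forall_mul_linearMap_eq_self {R : Type*} [Ring R] {ρ : R}
    (f : R →ₗ[R] R) (h : ∀ x, ρ * f x = x) : IsUnit ρ := by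
  refine isUnit_of_forall_mul_mul_eq_self (c := f 1) fun x => ?_
  rw [mul_assoc, ← smul_eq_mul x (f 1), ← f.map_smul, smul_eq_mul, mul_one, h]

theorem stmt17_general (R : Type) [Ring R]
    (ρ : R) (hρinv : ¬ IsUnit ρ) :
    ¬ ∃ h : ℕ → (R →ₗ[R] R),
      -- `h` commutes with the `u`-action
      (∀ n : ℕ, h (n + 2) = h n) ∧ h 1 = 0 ∧
      -- contraction in degree 0 (the differential out of degree `-1` is zero)
      (∀ x : R, h 0 (ρ * x) = x) ∧
      -- contraction in the degrees `n + 1`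
      (∀ (n : ℕ) (x : R),
        (if Even n then ρ * h n x else h n x) +
          h (n + 1) (if Even (n + 1) then ρ * x else x) = x) := by
  rintro ⟨h, -, h1, -, hcontr⟩
  refine hρinv (isUnit_of_forall_mul_linearMap_eq_self (h 0) fun x => ?_)
  simpa [h1] using hcontr 0 x

/-- **The module `A_{ρ,u}` over `R_ρ[u]` is not contractible when `ρ` is not
invertible (Example 3.15).**  Let `R` be a `k`-algebra with central element `ρ` which
is not invertible, and `A = R_ρ[u]` the cdg algebra `R[u]` (`u` of degree 2) with
curvature `ρu`.  The cdg `A`-module `A_{ρ,u}` is the precomplex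
`0 → R →^ρ R →^1 R →^ρ R →^1 ⋯` (components `R` in degrees `n ≥ 0`, differentials
`d_n = ρ·(-)` for even `n` and the identity for odd `n`), with `u` acting as the
degree 2 shift.  An `A`-linear contracting homotopy would consist of left `R`-linear
maps `h n : M^{n+1} → M^n` commuting with the `u`-action (which forces
`h (n+2) = h n`, and `h 1 = 0` since the map out of the bottom degree vanishes)
satisfying `d h + h d = id` in every degree.  No such homotopy exists. -/
theorem stmt17 (k : Type) [CommRing k] (R : Type) [Ring R] [Algebra k R]
    (ρ : R) (hρ : ∀ r : R, ρ * r = r * ρ) (hρinv : ¬ IsUnit ρ) :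
    ¬ ∃ h : ℕ → (R →ₗ[R] R),
      -- `h` commutes with the `u`-action
      (∀ n : ℕ, h (n + 2) = h n) ∧ h 1 = 0 ∧
      -- contraction in degree 0 (the differential out of degree `-1` is zero)
      (∀ x : R, h 0 (ρ * x) = x) ∧
      -- contraction in the degrees `n + 1`
      (∀ (n : ℕ) (x : R),
        (if Even n then ρ * h n x else h n x) +
          h (n + 1) (if Even (n + 1) then ρ * x else x) = x) :=
  stmt17_general R ρ hρinv
end
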